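/- Let A be an abelian category with finite morphism spaces over a finite field F_q. For objects A, B, C ∈ A, let Ext¹(A,C)_B ⊆ Ext¹(A,C) be the subset of extension classes with middle term isomorphic to B, and let g^B_{A,C} = #{C' ⊆ B : C' ≅ C and B/C' ≅ A}. Then g^B_{A,C} = (|Ext¹(A,C)_B| / |Hom(A,C)|) · (|Aut(B)| / (|Aut(A)|·|Aut(C)|)). -/

import Mathlib

open CategoryTheory Category Limits ZeroObject

universe v u

variable (𝒜 : Type u) [Category.{v} 𝒜] [Abelian 𝒜]

/-- A representative of an extension `0 → C → B → A → 0` of `A` by `C`. -/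
structure ExtRep (A C : 𝒜) where
  B : 𝒜
  ι : C ⟶ B
  π : B ⟶ A
  w : ι ≫ π = 0
  se : (ShortComplex.mk ι π w).ShortExact

/-- Equivalence of extensions. -/
def extEquiv {A C : 𝒜} (E F : ExtRep 𝒜 A C) : Prop :=
  ∃ e : E.B ≅ F.B, E.ι ≫ e.hom = F.ι ∧ e.hom ≫ F.π = E.π

/-- `Ext¹(A, C)` as the set of equivalence classes of extensions. -/
def Ext1 (A C : 𝒜) := Quot (extEquiv 𝒜 (A := A) (C := C))

/-- The subset `Ext¹(A, C)_B ⊆ Ext¹(A, C)` of classes whose middle term is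
isomorphic to `B`. -/
def ext1With (A C B : 𝒜) : Set (Ext1 𝒜 A C) :=
  {x | ∃ E : ExtRep 𝒜 A C, Quot.mk _ E = x ∧ Nonempty (E.B ≅ B)}

/-- The Hall number `g^B_{A,C}`: the number of subobjects `C' ⊆ B` with
`C' ≅ C` and `B/C' ≅ A`. -/
noncomputable def hallG (A C B : 𝒜) : ℕ :=
  Nat.card {S : Subobject B // Nonempty ((S : 𝒜) ≅ C) ∧
    Nonempty (cokernel S.arrow ≅ A)}

/-!
Both sides count the set `W` of short exact sequences `0 → C → B → A → 0` with fixed end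
terms. The group `Aut C × Aut A` acts simply transitively on the sequences with a given image
`C' ⊆ B`, so `|W| = g^B_{A,C} · |Aut C| · |Aut A|`. The group `Aut B` acts on `W` with orbits
the classes in `Ext¹(A,C)_B`, and the stabilizer of `C →ι B →π A` consists of the automorphisms
`1 + π f ι` with `f : A ⟶ C`, so `|W| · |Hom(A,C)| = |Ext¹(A,C)_B| · |Aut B|`.
-/

theorem MulAction.card_mul_card_eq_card_orbitRel_quotient_mul_card {G α H : Type*} [Group G]
    [MulAction G α] (e : ∀ a : α, H ≃ stabilizer G a) :
    Nat.card α * Nat.card H = Nat.card (orbitRel.Quotient G α) * Nat.card G := by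
  rw [← Nat.card_prod, ← Nat.card_prod]
  refine Nat.card_congr <|
    (Equiv.prodCongr (selfEquivSigmaOrbits G α) (Equiv.refl H)).trans <|
    (Equiv.sigmaProdDistrib _ _).trans <|
    (Equiv.sigmaCongrRight fun ω => ?_).trans (Equiv.sigmaEquivProd _ _)
  exact (Equiv.prodCongr (orbitEquivQuotientStabilizer G _) (e _)).trans
    Subgroup.groupEquivQuotientProdSubgroup.symm

namespace CategoryTheory

instance Aut.finite {𝒞 : Type*} [Category 𝒞] (X : 𝒞) [Finite (X ⟶ X)] : Finite (Aut X) :=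
  Finite.of_injective Iso.hom fun _ _ => Aut.ext

@[simps]
def Aut.oneAddOfCompSelfEqZero {𝒞 : Type*} [Category 𝒞] [Preadditive 𝒞] {X : 𝒞} (n : X ⟶ X)
    (hn : n ≫ n = 0) : Aut X where
  hom := 𝟙 X + n
  inv := 𝟙 X - n
  hom_inv_id := by simp [Preadditive.comp_sub, hn]
  inv_hom_id := by simp [Preadditive.comp_add, hn]

end CategoryTheory

variable {𝒜}

theorem extEquiv_equivalence {A C : 𝒜} : Equivalence (extEquiv 𝒜 (A := A) (C := C)) where
  refl _ := ⟨Iso.refl _, comp_id _, id_comp _⟩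
  symm := fun ⟨e, hι, hπ⟩ => ⟨e.symm, by simp [← hι], by simp [← hπ]⟩
  trans := fun ⟨e, hι, hπ⟩ ⟨f, hι', hπ'⟩ => ⟨e ≪≫ f, by simp [← hι', ← hι], by simp [hπ', hπ]⟩

abbrev HallSubobject (A C B : 𝒜) : Type _ :=
  {S : Subobject B // Nonempty ((S : 𝒜) ≅ C) ∧ Nonempty (cokernel S.arrow ≅ A)}

@[ext]
structure ShortExactSeq (C B A : 𝒜) where
  ι : C ⟶ B
  π : B ⟶ A
  w : ι ≫ π = 0
  shortExact : (ShortComplex.mk ι π w).ShortExact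

namespace ShortExactSeq

variable {C B A C' B' A' : 𝒜}

instance (p : ShortExactSeq C B A) : Mono p.ι := p.shortExact.mono_f

instance (p : ShortExactSeq C B A) : Epi p.π := p.shortExact.epi_g

@[simps]
def ofIsos (p : ShortExactSeq C B A) (u : C' ≅ C) (e : B ≅ B') (v : A ≅ A') :
    ShortExactSeq C' B' A' where
  ι := u.hom ≫ p.ι ≫ e.hom
  π := e.inv ≫ p.π ≫ v.hom
  w := by simp [reassoc_of% p.w]
  shortExact := ShortComplex.shortExact_of_iso (ShortComplex.isoMk u.symm e v) p.shortExact

def ofExtRep (E : ExtRep 𝒜 A C) : ShortExactSeq C E.B A := ⟨E.ι, E.π, E.w, E.se⟩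

def toExtRep (p : ShortExactSeq C B A) : ExtRep 𝒜 A C := ⟨B, p.ι, p.π, p.w, p.shortExact⟩

@[simps]
noncomputable def ofSubobject (S : Subobject B) : ShortExactSeq (S : 𝒜) B (cokernel S.arrow) where
  ι := S.arrow
  π := cokernel.π S.arrow
  w := cokernel.condition S.arrow
  shortExact := { exact := ShortComplex.exact_of_g_is_cokernel _ (cokernelIsCokernel S.arrow) }

theorem exists_cokernel_iso (p : ShortExactSeq C B A) {Y : 𝒜} (m : Y ⟶ B) (u : Y ≅ C)
    (hu : u.hom ≫ p.ι = m) : ∃ v : cokernel m ≅ A, cokernel.π m ≫ v.hom = p.π := by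
  subst hu
  refine ⟨cokernelEpiComp u.hom p.ι ≪≫
    (cokernelIsCokernel p.ι).coconePointUniqueUpToIso p.shortExact.gIsCokernel, ?_⟩
  simpa using (cokernelIsCokernel p.ι).comp_coconePointUniqueUpToIso_hom
    p.shortExact.gIsCokernel WalkingParallelPair.one

theorem exists_π_comp_comp_ι_eq (p : ShortExactSeq C B A) {g : B ⟶ B} (hι : p.ι ≫ g = 0)
    (hπ : g ≫ p.π = 0) : ∃ f : A ⟶ C, p.π ≫ f ≫ p.ι = g := by
  obtain ⟨k, hk⟩ : ∃ k : A ⟶ B, p.π ≫ k = g := ⟨_, p.shortExact.exact.g_desc g hι⟩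
  have hkπ : k ≫ p.π = 0 := by rw [← cancel_epi p.π, reassoc_of% hk, hπ, comp_zero]
  exact ⟨p.shortExact.exact.lift k hkπ, by rw [p.shortExact.exact.lift_f, hk]⟩

instance : SMul (Aut B) (ShortExactSeq C B A) where
  smul e p := p.ofIsos (Iso.refl C) e (Iso.refl A)

@[simp]
theorem smul_ι (e : Aut B) (p : ShortExactSeq C B A) : (e • p).ι = p.ι ≫ e.hom :=
  Category.id_comp _

@[simp]
theorem smul_π (e : Aut B) (p : ShortExactSeq C B A) : (e • p).π = e.inv ≫ p.π :=
  congrArg (e.inv ≫ ·) (Category.comp_id _)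

instance : MulAction (Aut B) (ShortExactSeq C B A) where
  one_smul p := ShortExactSeq.ext ((smul_ι 1 p).trans (comp_id p.ι))
    ((smul_π 1 p).trans (id_comp p.π))
  mul_smul e f p := ShortExactSeq.ext
    (by simp only [smul_ι]; exact (assoc p.ι f.hom e.hom).symm)
    (by simp only [smul_π]; exact assoc e.inv f.inv p.π)

theorem smul_eq_iff {e : Aut B} {p q : ShortExactSeq C B A} :
    e • p = q ↔ p.ι ≫ e.hom = q.ι ∧ e.hom ≫ q.π = p.π := by
  simp only [ShortExactSeq.ext_iff, smul_ι, smul_π]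
  exact and_congr_right' ((Iso.inv_comp_eq (α := (e : B ≅ B))).trans eq_comm)

theorem mem_stabilizer_iff {e : Aut B} {p : ShortExactSeq C B A} :
    e ∈ MulAction.stabilizer (Aut B) p ↔ p.ι ≫ e.hom = p.ι ∧ e.hom ≫ p.π = p.π :=
  smul_eq_iff

noncomputable def homEquivStabilizer (p : ShortExactSeq C B A) :
    (A ⟶ C) ≃ MulAction.stabilizer (Aut B) p :=
  Equiv.ofBijective
    (fun f => ⟨Aut.oneAddOfCompSelfEqZero (p.π ≫ f ≫ p.ι) (by simp [reassoc_of% p.w]),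
      mem_stabilizer_iff.2 ⟨by simp [reassoc_of% p.w], by simp [p.w]⟩⟩)
    ⟨fun f g hfg => by
      have h : p.π ≫ f ≫ p.ι = p.π ≫ g ≫ p.ι :=
        add_left_cancel (congrArg (fun e : MulAction.stabilizer (Aut B) p => e.1.hom) hfg)
      rwa [cancel_epi, cancel_mono] at h,
    fun ⟨e, he⟩ => by
      obtain ⟨hι, hπ⟩ := mem_stabilizer_iff.1 he
      obtain ⟨f, hf⟩ := p.exists_π_comp_comp_ι_eq (g := e.hom - 𝟙 B)
        (by rw [Preadditive.comp_sub, hι, comp_id, sub_self])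
        (by rw [Preadditive.sub_comp, hπ, id_comp, sub_self])
      exact ⟨f, Subtype.ext (Iso.ext (by simp [hf]))⟩⟩

def extClass (p : ShortExactSeq C B A) : ext1With 𝒜 A C B :=
  ⟨Quot.mk _ p.toExtRep, p.toExtRep, rfl, ⟨Iso.refl B⟩⟩

theorem extClass_eq_extClass_iff {p q : ShortExactSeq C B A} :
    p.extClass = q.extClass ↔ ∃ e : Aut B, e • p = q := by
  rw [Subtype.ext_iff]
  exact Quot.eq.trans <| extEquiv_equivalence.eqvGen_iff.trans <|
    exists_congr fun _ => smul_eq_iff.symm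

theorem extClass_surjective : Function.Surjective (extClass (C := C) (B := B) (A := A)) := by
  rintro ⟨_, E, rfl, ⟨f⟩⟩
  exact ⟨(ofExtRep E).ofIsos (Iso.refl C) f (Iso.refl A),
    Subtype.ext (Quot.sound ⟨f.symm, by simp [toExtRep, ofExtRep], by simp [toExtRep, ofExtRep]⟩)⟩

noncomputable def orbitRelQuotientEquivExt1With :
    MulAction.orbitRel.Quotient (Aut B) (ShortExactSeq C B A) ≃ ext1With 𝒜 A C B :=
  Equiv.ofBijective
    (Quotient.lift extClass fun _ _ ⟨e, he⟩ => extClass_eq_extClass_iff.2 ⟨e⁻¹, by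
      rw [← he, inv_smul_smul]⟩)
    ⟨fun x y => Quotient.inductionOn₂ x y fun _ _ h =>
      Quotient.sound (extClass_eq_extClass_iff.1 h.symm),
    fun x => let ⟨p, hp⟩ := extClass_surjective x; ⟨Quotient.mk _ p, hp⟩⟩

theorem card_mul_card_hom_eq_card_ext1With_mul :
    Nat.card (ShortExactSeq C B A) * Nat.card (A ⟶ C) =
      Nat.card (ext1With 𝒜 A C B) * Nat.card (Aut B) := by
  rw [MulAction.card_mul_card_eq_card_orbitRel_quotient_mul_card homEquivStabilizer,
    Nat.card_congr orbitRelQuotientEquivExt1With]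

noncomputable def hallSubobject (p : ShortExactSeq C B A) : HallSubobject A C B :=
  ⟨Subobject.mk p.ι, ⟨Subobject.underlyingIso p.ι⟩,
    (p.exists_cokernel_iso _ _ (Subobject.underlyingIso_hom_comp_eq_mk p.ι)).elim
      fun v _ => ⟨v⟩⟩

noncomputable def isoProdIsoEquivFiber (S : Subobject B) :
    (C ≅ S) × (cokernel S.arrow ≅ A) ≃ {p : ShortExactSeq C B A // Subobject.mk p.ι = S} :=
  Equiv.ofBijective
    (fun uv => ⟨(ofSubobject S).ofIsos uv.1 (Iso.refl B) uv.2,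
      (Subobject.mk_eq_mk_of_comm _ S.arrow uv.1 (by simp)).trans S.mk_arrow⟩)
    ⟨fun ⟨u, v⟩ ⟨u', v'⟩ h => by
      obtain ⟨hι, hπ⟩ := ShortExactSeq.ext_iff.1 (congrArg Subtype.val h)
      simp only [ofIsos_ι, ofSubobject_ι, Iso.refl_hom, comp_id, cancel_mono, ofIsos_π,
        ofSubobject_π, Iso.refl_inv, id_comp, cancel_epi] at hι hπ
      rw [Iso.ext hι, Iso.ext hπ],
    fun ⟨p, hp⟩ => by
      let u := Subobject.isoOfMkEq p.ι S hp
      have hu : u.hom ≫ S.arrow = p.ι := Subobject.ofMkLE_arrow _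
      obtain ⟨v, hv⟩ := p.exists_cokernel_iso S.arrow u.symm (by simp [← hu])
      exact ⟨(u, v), Subtype.ext (ShortExactSeq.ext (by simp [hu]) (by simp [hv]))⟩⟩

theorem card_eq_hallG_mul :
    Nat.card (ShortExactSeq C B A) = hallG 𝒜 A C B * (Nat.card (Aut C) * Nat.card (Aut A)) := by
  rw [hallG, ← Nat.card_prod, ← Nat.card_prod]
  refine Nat.card_congr <| (Equiv.sigmaFiberEquiv hallSubobject).symm.trans <|
    (Equiv.sigmaCongrRight fun S => ?_).trans (Equiv.sigmaEquivProd _ _)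
  obtain ⟨S, hC, hA⟩ := S
  exact (Equiv.subtypeEquivRight fun _ => Subtype.ext_iff).trans <|
    (isoProdIsoEquivFiber S).symm.trans <|
    Equiv.prodCongr (Iso.isoCongrRight hC.some) (Iso.isoCongrLeft hA.some)

end ShortExactSeq

/-- the Riedtmann–Peng formula
`g^B_{A,C} = (|Ext¹(A,C)_B| / |Hom(A,C)|) · (|Aut B| / (|Aut A|·|Aut C|))`. -/
theorem stmt6 [∀ X Y : 𝒜, Finite (X ⟶ Y)] (A C B : 𝒜) :
    (hallG 𝒜 A C B : ℚ) =
      ((Nat.card (ext1With 𝒜 A C B) : ℚ) / (Nat.card (A ⟶ C) : ℚ)) *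
        ((Nat.card (Aut B) : ℚ) /
          ((Nat.card (Aut A) : ℚ) * (Nat.card (Aut C) : ℚ))) := by
  have key := ShortExactSeq.card_eq_hallG_mul (C := C) (B := B) (A := A) ▸
    ShortExactSeq.card_mul_card_hom_eq_card_ext1With_mul
  have hHom : (Nat.card (A ⟶ C) : ℚ) ≠ 0 := Nat.cast_ne_zero.2 Nat.card_pos.ne'
  have hA : (Nat.card (Aut A) : ℚ) ≠ 0 := Nat.cast_ne_zero.2 Nat.card_pos.ne'
  have hC : (Nat.card (Aut C) : ℚ) ≠ 0 := Nat.cast_ne_zero.2 Nat.card_pos.ne'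
  field_simp
  norm_cast
  rw [← key]
  ring
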